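/- Assume ∂₂σ₁ = ∂₁σ₂ on a neighborhood of 0. Let γ be the C¹ function given near 0 by the implicit function theorem (using ∂₁Φ(0) = α ≠ 0) with Φ(γ(h,l), l) = h. Then ∂γ/∂l (h,l) = −A(γ(h,l), l), and for every fixed h and every l such that (γ(h,l), l) ∈ Ω_r, the derivative of the rotation number along the energy level satisfies (∂/∂l)[W(γ(h,l), l)] = −A·∂₁W + ∂₂W evaluated at (γ(h,l), l), which equals S(γ(h,l), l) with S given by the explicit formula 2π·S = −A²·∂₁τ₁ + 2A·∂₂τ₁ − ∂₂τ₂ − τ₁·A·∂₁A + τ₁·∂₂A. -/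

import Mathlib

open Real Complex Filter Topology

/-- First partial derivative (direction `1`) of a function on `ℂ ≃ ℝ²`. -/
noncomputable def pd1 (f : ℂ → ℝ) (z : ℂ) : ℝ := fderiv ℝ f z 1

/-- Second partial derivative (direction `i`) of a function on `ℂ ≃ ℝ²`. -/
noncomputable def pd2 (f : ℂ → ℝ) (z : ℂ) : ℝ := fderiv ℝ f z Complex.I

/-- The slit punctured disc `Ω_r = {j : 0 < |j| < r, ζ ∉ (-∞,0]}`. -/
def slitDisc (r : ℝ) : Set ℂ :=
  {z : ℂ | 0 < ‖z‖ ∧ ‖z‖ < r ∧ ¬(z.re ≤ 0 ∧ z.im = 0)}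

/-- The period `τ₁(j) = σ₁(j) - ln|j|`. -/
noncomputable def tau1 (σ₁ : ℂ → ℝ) (z : ℂ) : ℝ := σ₁ z - Real.log (‖z‖)

/-- The period `τ₂(j) = σ₂(j) + arg ζ`. -/
noncomputable def tau2 (σ₂ : ℂ → ℝ) (z : ℂ) : ℝ := σ₂ z + Complex.arg z

/-- `∂₁τ₁ = ∂₁σ₁ - j₁/|j|²` (extended to the full punctured disc). -/
noncomputable def d1tau1 (σ₁ : ℂ → ℝ) (z : ℂ) : ℝ := pd1 σ₁ z - z.re / ‖z‖ ^ 2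

/-- `∂₂τ₁ = ∂₂σ₁ - j₂/|j|²` (extended to the full punctured disc). -/
noncomputable def d2tau1 (σ₁ : ℂ → ℝ) (z : ℂ) : ℝ := pd2 σ₁ z - z.im / ‖z‖ ^ 2

/-- `∂₂τ₂ = ∂₂σ₂ + j₁/|j|²` (extended to the full punctured disc). -/
noncomputable def d2tau2 (σ₂ : ℂ → ℝ) (z : ℂ) : ℝ := pd2 σ₂ z + z.re / ‖z‖ ^ 2

/-- `A(j) = ∂₂Φ(j) / ∂₁Φ(j)`. -/
noncomputable def Afun (Φ : ℂ → ℝ) (z : ℂ) : ℝ := pd2 Φ z / pd1 Φ z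

/-- The rotation number `W(j) = (τ₁(j) A(j) - τ₂(j)) / (2π)`. -/
noncomputable def Wrot (σ₁ σ₂ Φ : ℂ → ℝ) (z : ℂ) : ℝ :=
  (tau1 σ₁ z * Afun Φ z - tau2 σ₂ z) / (2 * Real.pi)

/-- The twist: `2π S(j) = -A² ∂₁τ₁ + 2A ∂₂τ₁ - ∂₂τ₂ - τ₁ A ∂₁A + τ₁ ∂₂A`. -/
noncomputable def twoPiS (σ₁ σ₂ Φ : ℂ → ℝ) (z : ℂ) : ℝ :=
  -(Afun Φ z) ^ 2 * d1tau1 σ₁ z + 2 * Afun Φ z * d2tau1 σ₁ z - d2tau2 σ₂ z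
    - tau1 σ₁ z * Afun Φ z * pd1 (Afun Φ) z + tau1 σ₁ z * pd2 (Afun Φ) z

/-- along the energy level `Φ = h`, parametrized via the implicit
function `γ` with `Φ(γ(h,l), l) = h`, one has `∂γ/∂l = -A`, and the derivative of the
rotation number with respect to `l` at constant energy is
`-A ∂₁W + ∂₂W = S = (2π S)/(2π)` with the explicit twist formula. -/
theorem twist_is_isoenergetic_derivative_of_rotation_number
    (r : ℝ) (hr : 0 < r) (σ₁ σ₂ Φ : ℂ → ℝ) (U : Set ℂ)
    (hUopen : IsOpen U) (hU0 : (0 : ℂ) ∈ U)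
    (hσ₁ : ContDiffOn ℝ (⊤ : ℕ∞) σ₁ U) (hσ₂ : ContDiffOn ℝ (⊤ : ℕ∞) σ₂ U)
    (hΦ : ContDiffOn ℝ (⊤ : ℕ∞) Φ U)
    (hΦ1 : ∀ z ∈ U, pd1 Φ z ≠ 0)
    (hsub : slitDisc r ⊆ U)
    (hsym : ∀ z ∈ U, pd2 σ₁ z = pd1 σ₂ z)
    (V : Set (ℝ × ℝ)) (hVopen : IsOpen V) (hV0 : (Φ 0, (0 : ℝ)) ∈ V)
    (γ : ℝ × ℝ → ℝ) (hγ : ContDiffOn ℝ 1 γ V) (hγ0 : γ (Φ 0, 0) = 0)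
    (hγΦ : ∀ p ∈ V, Φ ((γ p : ℂ) + (p.2 : ℂ) * Complex.I) = p.1) :
    ∀ h l : ℝ, ∀ j : ℂ, (h, l) ∈ V →
      j = (γ (h, l) : ℂ) + (l : ℂ) * Complex.I → j ∈ U →
      (fderiv ℝ γ (h, l) (0, 1) = -Afun Φ j ∧
        (j ∈ slitDisc r →
          HasDerivAt (fun t : ℝ => Wrot σ₁ σ₂ Φ ((γ (h, t) : ℂ) + (t : ℂ) * Complex.I))
            (-Afun Φ j * pd1 (Wrot σ₁ σ₂ Φ) j + pd2 (Wrot σ₁ σ₂ Φ) j) l ∧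
          -Afun Φ j * pd1 (Wrot σ₁ σ₂ Φ) j + pd2 (Wrot σ₁ σ₂ Φ) j =
            twoPiS σ₁ σ₂ Φ j / (2 * Real.pi))) := by
  intro h l j hVmem hjeq hjU
  have hUnhds : U ∈ 𝓝 j := hUopen.mem_nhds hjU
  set G := fderiv ℝ γ (h, l) with hG
  have hγat : ContDiffAt ℝ 1 γ (h, l) := hγ.contDiffAt (hVopen.mem_nhds hVmem)
  have hγF : HasFDerivAt γ G (h, l) := (hγat.differentiableAt one_ne_zero).hasFDerivAt
  have h1 : HasFDerivAt (fun p : ℝ × ℝ => (γ p : ℂ)) (Complex.ofRealCLM.comp G) (h, l) :=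
    Complex.ofRealCLM.hasFDerivAt.comp _ hγF
  have h2 : HasFDerivAt (fun p : ℝ × ℝ => (p.2 : ℂ) * Complex.I)
      ((ContinuousLinearMap.snd ℝ ℝ ℝ).smulRight Complex.I) (h, l) := by
    have := ((ContinuousLinearMap.snd ℝ ℝ ℝ).smulRight (Complex.I)).hasFDerivAt (x := (h, l))
    convert this using 1; funext p; simp [Complex.real_smul]
  set Dγ := Complex.ofRealCLM.comp G + (ContinuousLinearMap.snd ℝ ℝ ℝ).smulRight Complex.I
    with hDγ
  have hγc : HasFDerivAt (fun p : ℝ × ℝ => (γ p : ℂ) + (p.2 : ℂ) * Complex.I) Dγ (h, l) :=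
    h1.add h2
  have hΦat : ContDiffAt ℝ (⊤ : ℕ∞) Φ j := hΦ.contDiffAt hUnhds
  have hΦF : HasFDerivAt Φ (fderiv ℝ Φ j) j := (hΦat.differentiableAt (by simp)).hasFDerivAt
  have hΦF' : HasFDerivAt Φ (fderiv ℝ Φ j)
      ((fun p : ℝ × ℝ => (γ p : ℂ) + (p.2 : ℂ) * Complex.I) (h, l)) := by
    simpa [← hjeq] using hΦF
  have hcomp := hΦF'.comp (h, l) hγc
  have heq : (fun p : ℝ × ℝ => Φ ((γ p : ℂ) + (p.2 : ℂ) * Complex.I))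
      =ᶠ[𝓝 (h, l)] fun p : ℝ × ℝ => p.1 :=
    eventually_of_mem (hVopen.mem_nhds hVmem) hγΦ
  have huniq : (fderiv ℝ Φ j).comp Dγ = ContinuousLinearMap.fst ℝ ℝ ℝ :=
    (hcomp.congr_of_eventuallyEq heq.symm).unique (ContinuousLinearMap.fst ℝ ℝ ℝ).hasFDerivAt
  have hkey : fderiv ℝ Φ j ((G (0, 1) : ℂ) + Complex.I) = 0 := by
    have := congrArg (fun L : (ℝ × ℝ) →L[ℝ] ℝ => L (0, 1)) huniq
    simpa [hDγ, ContinuousLinearMap.comp_apply] using this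
  have hlin : fderiv ℝ Φ j ((G (0, 1) : ℂ) + Complex.I)
      = G (0, 1) * pd1 Φ j + pd2 Φ j := by
    have h3 : (G (0, 1) : ℂ) = G (0, 1) • (1 : ℂ) := by simp [Complex.real_smul]
    rw [h3, map_add, map_smul, smul_eq_mul]
    rfl
  have hA0 : pd1 Φ j ≠ 0 := hΦ1 j hjU
  have hpart1 : G (0, 1) = -Afun Φ j := by
    have h4 : G (0, 1) * pd1 Φ j + pd2 Φ j = 0 := by rw [← hlin, hkey]
    rw [Afun]
    field_simp
    linarith
  refine ⟨hpart1, fun hjs => ?_⟩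
  -- part 2
  have hslit : j ∈ Complex.slitPlane := by
    rcases lt_or_ge 0 j.re with h' | h'
    · exact Or.inl h'
    · exact Or.inr fun him => hjs.2.2 ⟨h', him⟩
  have hσ₁F : HasFDerivAt σ₁ (fderiv ℝ σ₁ j) j :=
    ((hσ₁.contDiffAt hUnhds).differentiableAt (by simp)).hasFDerivAt
  have hσ₂F : HasFDerivAt σ₂ (fderiv ℝ σ₂ j) j :=
    ((hσ₂.contDiffAt hUnhds).differentiableAt (by simp)).hasFDerivAt
  have hlogC : HasFDerivAt Complex.log ((1 : ℂ →L[ℂ] ℂ).smulRight j⁻¹) j :=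
    (Complex.hasDerivAt_log hslit).hasFDerivAt
  have hlogR := hlogC.restrictScalars ℝ
  set DL : ℂ →L[ℝ] ℂ := ((1 : ℂ →L[ℂ] ℂ).smulRight j⁻¹).restrictScalars ℝ with hDL
  have hLabs : HasFDerivAt (fun z => Real.log (‖z‖)) (Complex.reCLM.comp DL) j := by
    have := Complex.reCLM.hasFDerivAt.comp j hlogR
    simpa [Function.comp_def, Complex.log_re] using this
  have hArg : HasFDerivAt (fun z => Complex.arg z) (Complex.imCLM.comp DL) j := by
    have := Complex.imCLM.hasFDerivAt.comp j hlogR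
    simpa [Function.comp_def, Complex.log_im] using this
  have hfdΦ : ContDiffAt ℝ (⊤ : ℕ∞) (fderiv ℝ Φ) j := hΦat.fderiv_right (by simp)
  have hp1 : DifferentiableAt ℝ (pd1 Φ) j := by
    show DifferentiableAt ℝ (fun z => fderiv ℝ Φ z 1) j
    exact (ContinuousLinearMap.apply ℝ ℝ (1 : ℂ)).differentiableAt.comp j
      (hfdΦ.differentiableAt (by simp))
  have hp2 : DifferentiableAt ℝ (pd2 Φ) j := by
    show DifferentiableAt ℝ (fun z => fderiv ℝ Φ z Complex.I) j
    exact (ContinuousLinearMap.apply ℝ ℝ (Complex.I)).differentiableAt.comp j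
      (hfdΦ.differentiableAt (by simp))
  have hAd : DifferentiableAt ℝ (Afun Φ) j := by
    have h5 : Afun Φ = fun z => pd2 Φ z * (pd1 Φ z)⁻¹ := by
      funext z; rw [Afun, div_eq_mul_inv]
    rw [h5]
    exact hp2.mul (hp1.inv hA0)
  have hAF : HasFDerivAt (Afun Φ) (fderiv ℝ (Afun Φ) j) j := hAd.hasFDerivAt
  have hτ₁F : HasFDerivAt (tau1 σ₁) (fderiv ℝ σ₁ j - Complex.reCLM.comp DL) j :=
    hσ₁F.sub hLabs
  have hτ₂F : HasFDerivAt (tau2 σ₂) (fderiv ℝ σ₂ j + Complex.imCLM.comp DL) j :=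
    hσ₂F.add hArg
  set DW : ℂ →L[ℝ] ℝ :=
    (2 * Real.pi)⁻¹ • ((tau1 σ₁ j • fderiv ℝ (Afun Φ) j
        + Afun Φ j • (fderiv ℝ σ₁ j - Complex.reCLM.comp DL))
      - (fderiv ℝ σ₂ j + Complex.imCLM.comp DL)) with hDW
  have hWF : HasFDerivAt (Wrot σ₁ σ₂ Φ) DW j := by
    have hmul := hτ₁F.mul hAF
    have hsub' := hmul.sub hτ₂F
    have := hsub'.const_mul (2 * Real.pi)⁻¹
    have heqW : Wrot σ₁ σ₂ Φ
        = fun z => (2 * Real.pi)⁻¹ * (tau1 σ₁ z * Afun Φ z - tau2 σ₂ z) := by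
      funext z; rw [Wrot]; ring
    rw [heqW, hDW]
    exact this
  have hcurve : HasDerivAt (fun t : ℝ => (γ (h, t) : ℂ) + (t : ℂ) * Complex.I)
      (Dγ (0, 1)) l := by
    have hpl : HasDerivAt (fun t : ℝ => ((h, t) : ℝ × ℝ)) ((0 : ℝ), (1 : ℝ)) l :=
      (hasDerivAt_const l h).prodMk (hasDerivAt_id l)
    exact hγc.comp_hasDerivAt l hpl
  have hWF' : HasFDerivAt (Wrot σ₁ σ₂ Φ) DW
      ((fun t : ℝ => (γ (h, t) : ℂ) + (t : ℂ) * Complex.I) l) := by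
    simpa [← hjeq] using hWF
  have hderiv : HasDerivAt (fun t : ℝ => Wrot σ₁ σ₂ Φ ((γ (h, t) : ℂ) + (t : ℂ) * Complex.I))
      (DW (Dγ (0, 1))) l := by have := hWF'.comp_hasDerivAt l hcurve; exact this
  have hDγ01 : Dγ (0, 1) = (G (0, 1) : ℂ) + Complex.I := by
    simp [hDγ]
  have hval : DW (Dγ (0, 1)) = -Afun Φ j * pd1 (Wrot σ₁ σ₂ Φ) j + pd2 (Wrot σ₁ σ₂ Φ) j := by
    have hfd : fderiv ℝ (Wrot σ₁ σ₂ Φ) j = DW := hWF.fderiv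
    rw [hDγ01, hpart1]
    have h3 : ((-Afun Φ j : ℝ) : ℂ) = (-Afun Φ j) • (1 : ℂ) := by simp [Complex.real_smul]
    rw [h3, map_add, map_smul, smul_eq_mul]
    show _ = -Afun Φ j * fderiv ℝ (Wrot σ₁ σ₂ Φ) j 1 + fderiv ℝ (Wrot σ₁ σ₂ Φ) j Complex.I
    rw [hfd]
  constructor
  · rw [← hval]; exact hderiv
  · -- the explicit formula
    have hfd : fderiv ℝ (Wrot σ₁ σ₂ Φ) j = DW := hWF.fderiv
    have hsymj : fderiv ℝ σ₁ j Complex.I = fderiv ℝ σ₂ j 1 := hsym j hjU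
    have hj0 : j ≠ 0 := Complex.slitPlane_ne_zero hslit
    have hnorm : Complex.normSq j ≠ 0 := (Complex.normSq_pos.mpr hj0).ne'
    have habs : ‖j‖ ^ 2 = Complex.normSq j := Complex.sq_norm j
    have hπ : (2 * Real.pi) ≠ 0 := by positivity
    show -Afun Φ j * pd1 (Wrot σ₁ σ₂ Φ) j + pd2 (Wrot σ₁ σ₂ Φ) j = _
    rw [pd1, pd2, hfd, hDW]
    simp only [twoPiS, d1tau1, d2tau1, d2tau2, pd1, pd2, hDL,
      ContinuousLinearMap.smul_apply, ContinuousLinearMap.sub_apply,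
      ContinuousLinearMap.add_apply, ContinuousLinearMap.coe_comp',
      Function.comp_apply, ContinuousLinearMap.coe_restrictScalars',
      ContinuousLinearMap.smulRight_apply, ContinuousLinearMap.one_apply,
      Complex.reCLM_apply, Complex.imCLM_apply, smul_eq_mul,
      Complex.real_smul, one_smul]
    simp only [Complex.smul_re, Complex.smul_im, Complex.inv_re, Complex.inv_im,
      Complex.mul_re, Complex.mul_im, Complex.I_re, Complex.I_im, Complex.one_re,
      Complex.one_im, habs]
    rw [hsymj]
    field_simp
    ring
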